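/- Let G be a group and K a field of characteristic 0 with algebraic closure K̄. Let ρ : G → GL_n(K̄) be a semisimple representation with irreducible decomposition ρ ≅ ρ₁ ⊕ ⋯ ⊕ ρ_r. Assume: (i) Tr ρ(g) ∈ K for every g ∈ G; (ii) there exists g₀ ∈ G such that the characteristic polynomial of ρ(g₀) has n distinct roots, all lying in K. Then for each i (1 ≤ i ≤ r) and every g ∈ G, the trace Tr ρ_i(g) lies in K. -/

import Mathlib

open Matrix Polynomial

/-- A matrix representation `ρ : G → GLₙ(F)` is *defined over* a subfield `E ⊆ F` if some
single conjugate of it has all matrix entries in `E`. -/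
def MatRep.IsDefinedOver {G : Type*} [Group G] {F : Type*} [Field F] {ι : Type*}
    [Fintype ι] [DecidableEq ι]
    (ρ : G →* Matrix.GeneralLinearGroup ι F) (E : Subfield F) : Prop :=
  ∃ M : Matrix.GeneralLinearGroup ι F,
    ∀ (g : G) (i j : ι),
      ((M * ρ g * M⁻¹ : Matrix.GeneralLinearGroup ι F) : Matrix ι ι F) i j ∈ E

/-- A matrix representation is *irreducible* if the underlying space is nonzero and the only
`G`-invariant subspaces (for the `mulVec` action) are `⊥` and `⊤`. -/
def MatRep.IsIrreducible {G : Type*} [Group G] {F : Type*} [Field F] {ι : Type*}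
    [Fintype ι] [DecidableEq ι]
    (ρ : G →* Matrix.GeneralLinearGroup ι F) : Prop :=
  Nonempty ι ∧
    ∀ p : Submodule F (ι → F),
      (∀ g : G, ∀ v ∈ p, ((ρ g : Matrix ι ι F)).mulVec v ∈ p) → p = ⊥ ∨ p = ⊤

/-!
Since `ρ(g₀)` has `n` distinct eigenvalues, all in `K`, and its characteristic polynomial is the
product of those of the blocks `ρⱼ(g₀)`, different blocks have disjoint sets of eigenvalues.
Lagrange interpolation over `K` gives `f ∈ K[X]` that is `1` on the eigenvalues of `ρᵢ(g₀)` and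
`0` on the others; by Cayley–Hamilton `f(ρ(g₀))` is then the projection onto the `i`-th block, so
`Tr ρᵢ(g) = Tr (f(ρ(g₀)) ρ(g))`, a `K`-linear combination of the traces `Tr ρ(g₀ᵏ g) ∈ K`.
-/

theorem Polynomial.not_isRoot_of_mul_dvd_of_nodup_roots {R : Type*} [CommRing R] [IsDomain R]
    {p q P : R[X]} (hP : P ≠ 0) (hnd : P.roots.Nodup) (hdvd : p * q ∣ P) {x : R}
    (hp : p.IsRoot x) : ¬q.IsRoot x := by
  classical
  intro hq
  have hsq : (X - C x) ^ 2 ∣ P :=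
    (pow_two (X - C x) ▸ mul_dvd_mul (dvd_iff_isRoot.2 hp) (dvd_iff_isRoot.2 hq)).trans hdvd
  have h2 := (le_rootMultiplicity_iff hP).2 hsq
  rw [← count_roots] at h2
  have := Multiset.nodup_iff_count_le_one.1 hnd x
  omega

namespace Matrix

variable {R : Type*} [CommRing R] {ι : Type*} [DecidableEq ι] {m : ι → Type*}

theorem trace_reindex {α n p : Type*} [AddCommMonoid α] [Fintype n] [Fintype p] (e : n ≃ p)
    (A : Matrix n n α) :
    (reindex e e A).trace = A.trace := by
  simp only [trace, diag, reindex_apply, submatrix_apply]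
  exact e.symm.sum_comp fun i => A i i

theorem toSquareBlock_blockDiagonal' {α : Type*} [Zero α] (B : ∀ i, Matrix (m i) (m i) α)
    (i : ι) :
    (blockDiagonal' B).toSquareBlock Sigma.fst i =
      reindex (Equiv.sigmaSubtype i).symm (Equiv.sigmaSubtype i).symm (B i) := by
  ext ⟨⟨j, a⟩, hj⟩ ⟨⟨k, b⟩, hk⟩
  dsimp only at hj hk
  subst hj hk
  simp [toSquareBlock_def]

variable [Fintype ι] [∀ i, Fintype (m i)] [∀ i, DecidableEq (m i)]

theorem charpoly_blockDiagonal' (B : ∀ i, Matrix (m i) (m i) R) :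
    (blockDiagonal' B).charpoly = ∏ i, (B i).charpoly := by
  -- any order on the blocks makes a block-diagonal matrix block-triangular
  let : LinearOrder ι := LinearOrder.lift' _ (Fintype.equivFin ι).injective
  rw [charpoly, (blockTriangular_blockDiagonal' B).charmatrix.det_fintype]
  simp_rw [← charmatrix_toSquareBlock, toSquareBlock_blockDiagonal']
  exact Finset.prod_congr rfl fun i _ => charpoly_reindex _ _

variable (R m) in
def blockDiagonal'AlgHom :
    (∀ i, Matrix (m i) (m i) R) →ₐ[R] Matrix (Σ i, m i) (Σ i, m i) R :=
  { blockDiagonal'RingHom m R with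
    commutes' := fun r => by
      change blockDiagonal' (fun i => algebraMap R _ r) = _
      simp only [algebraMap_eq_diagonal, blockDiagonal'_diagonal]
      rfl }

variable {n : Type*} [Fintype n] [DecidableEq n]

def blockDiagonalConj (M : (Matrix n n R)ˣ) (e : (Σ i, m i) ≃ n) :
    (∀ i, Matrix (m i) (m i) R) →ₐ[R] Matrix n n R :=
  (MulSemiringAction.toAlgEquiv R _ (ConjAct.toConjAct M)).toAlgHom.comp
    ((reindexAlgEquiv R R e).toAlgHom.comp (blockDiagonal'AlgHom R m))

theorem blockDiagonalConj_apply (M : (Matrix n n R)ˣ) (e : (Σ i, m i) ≃ n)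
    (B : ∀ i, Matrix (m i) (m i) R) :
    blockDiagonalConj M e B = (M : Matrix n n R) * reindex e e (blockDiagonal' B) *
      ((M⁻¹ : (Matrix n n R)ˣ) : Matrix n n R) :=
  rfl

theorem trace_blockDiagonalConj (M : (Matrix n n R)ˣ) (e : (Σ i, m i) ≃ n)
    (B : ∀ i, Matrix (m i) (m i) R) :
    (blockDiagonalConj M e B).trace = ∑ i, (B i).trace := by
  rw [blockDiagonalConj_apply, trace_units_conj, trace_reindex, trace_blockDiagonal']

theorem charpoly_blockDiagonalConj (M : (Matrix n n R)ˣ) (e : (Σ i, m i) ≃ n)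
    (B : ∀ i, Matrix (m i) (m i) R) :
    (blockDiagonalConj M e B).charpoly = ∏ i, (B i).charpoly := by
  rw [blockDiagonalConj_apply, coe_units_inv, charpoly_units_conj, charpoly_reindex,
    charpoly_blockDiagonal']

theorem aeval_eq_algebraMap_of_eval_eq_on_roots {R : Type*} [CommRing R] [IsDomain R]
    {A : Matrix n n R} (hs : A.charpoly.Splits) (hnd : A.charpoly.roots.Nodup) {p : R[X]} {c : R}
    (hp : ∀ x ∈ A.charpoly.roots, p.eval x = c) : aeval A p = algebraMap R _ c := by
  have hdvd : A.charpoly ∣ p - C c := by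
    by_cases h0 : p - C c = 0
    · rw [h0]
      exact dvd_zero _
    rw [hs.eq_prod_roots_of_monic (charpoly_monic A), Multiset.prod_X_sub_C_dvd_iff_le_roots h0,
      Multiset.le_iff_subset hnd]
    intro x hx
    rw [mem_roots h0, IsRoot, eval_sub, eval_C, hp x hx, sub_self]
  obtain ⟨q, hq⟩ := hdvd
  rw [← sub_eq_zero, ← aeval_C, ← map_sub, hq, map_mul, aeval_self_charpoly, zero_mul]

theorem aeval_eq_ite_of_prod_charpoly_eq {F : Type*} [Field F] [DecidableEq F] {ι : Type*}
    [Fintype ι] [DecidableEq ι] {m : ι → Type*} [∀ i, Fintype (m i)] [∀ i, DecidableEq (m i)]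
    (B : ∀ i, Matrix (m i) (m i) F) {P : F[X]} (hB : ∏ i, (B i).charpoly = P) (hP : P ≠ 0)
    (hs : P.Splits) (hnd : P.roots.Nodup) {i : ι} {p : F[X]}
    (hp : ∀ x ∈ P.roots, p.eval x = if (B i).charpoly.IsRoot x then 1 else 0) (j : ι) :
    aeval (B j) p = if j = i then 1 else 0 := by
  have hdvd : ∀ k, (B k).charpoly ∣ P :=
    fun k => hB ▸ Finset.dvd_prod_of_mem _ (Finset.mem_univ k)
  have hroots : (B j).charpoly.roots ≤ P.roots := roots.le_of_dvd hP (hdvd j)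
  rw [aeval_eq_algebraMap_of_eval_eq_on_roots (hs.of_dvd hP (hdvd j))
    (Multiset.nodup_of_le hroots hnd) (c := if j = i then 1 else 0)]
  · split_ifs <;> simp
  intro x hx
  have hjx := (mem_roots'.1 hx).2
  rw [hp x (Multiset.mem_of_le hroots hx)]
  split_ifs with hix hji hji
  · rfl
  · refine absurd hix (not_isRoot_of_mul_dvd_of_nodup_roots hP hnd ?_ hjx)
    rw [← hB, ← Finset.prod_erase_mul _ _ (Finset.mem_univ i)]
    exact mul_dvd_mul_right (Finset.dvd_prod_of_mem (fun k => (B k).charpoly)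
      (Finset.mem_erase.2 ⟨hji, Finset.mem_univ j⟩)) _
  · exact absurd (hji ▸ hjx) hix
  · rfl

theorem exists_aeval_eq_ite_of_prod_charpoly_eq {K F : Type*} [Field K] [Field F] [Algebra K F]
    {ι κ : Type*} [Fintype ι] [DecidableEq ι] [Fintype κ] {m : ι → Type*}
    [∀ i, Fintype (m i)] [∀ i, DecidableEq (m i)]
    (B : ∀ i, Matrix (m i) (m i) F) {a : κ → K} (ha : Function.Injective a)
    (hB : ∏ i, (B i).charpoly = ∏ k, (X - C (algebraMap K F (a k)))) (i : ι) :
    ∃ f : K[X], ∀ j, aeval (B j) f = if j = i then 1 else 0 := by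
  classical
  set s := Finset.univ.image (algebraMap K F ∘ a)
  have hP : ∏ k, (X - C (algebraMap K F (a k))) = ∏ x ∈ s, (X - C x) := by
    rw [Finset.prod_image ((algebraMap K F).injective.comp ha).injOn]
    rfl
  obtain ⟨f, hfa⟩ : ∃ f : K[X], ∀ k,
      f.eval (a k) = if (B i).charpoly.IsRoot (algebraMap K F (a k)) then 1 else 0 :=
    ⟨_, fun k => Lagrange.eval_interpolate_at_node _ ha.injOn (Finset.mem_univ k)⟩
  refine ⟨f, fun j => ?_⟩
  rw [← aeval_map_algebraMap F]
  refine aeval_eq_ite_of_prod_charpoly_eq B (hB.trans hP)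
    (monic_prod_of_monic _ _ fun x _ => monic_X_sub_C x).ne_zero
    (Splits.prod fun x _ => Splits.X_sub_C x) (by rw [roots_prod_X_sub_C]; exact s.nodup)
    (fun x hx => ?_) j
  rw [roots_prod_X_sub_C] at hx
  obtain ⟨k, -, rfl⟩ := Finset.mem_image.1 hx
  rw [eval_map_algebraMap, Function.comp_apply, aeval_algebraMap_apply, coe_aeval_eq_eval, hfa,
    apply_ite (algebraMap K F), map_one, map_zero]

theorem trace_aeval_mul_mem_fieldRange {K F : Type*} [Field K] [Field F] [Algebra K F]
    {G : Type*} [Monoid G] (ρ : G →* Matrix n n F)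
    (htr : ∀ g, (ρ g).trace ∈ (algebraMap K F).fieldRange) (f : K[X]) (g₀ g : G) :
    (aeval (ρ g₀) f * ρ g).trace ∈ (algebraMap K F).fieldRange := by
  rw [aeval_eq_sum_range, Finset.sum_mul, trace_sum]
  refine sum_mem fun k _ => ?_
  rw [smul_mul_assoc, trace_smul, ← map_pow, ← map_mul, Algebra.smul_def]
  exact mul_mem (RingHom.mem_fieldRange_self _ _) (htr _)

end Matrix

theorem component_traces_mem_base_general
    {G : Type*} [Group G] {K : Type*} [Field K] {n r : ℕ}
    (ρ : G →* Matrix.GeneralLinearGroup (Fin n) (AlgebraicClosure K))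
    (m : Fin r → ℕ)
    (ρi : (i : Fin r) → G →* Matrix.GeneralLinearGroup (Fin (m i)) (AlgebraicClosure K))
    (e : (Σ i : Fin r, Fin (m i)) ≃ Fin n)
    (M : Matrix.GeneralLinearGroup (Fin n) (AlgebraicClosure K))
    (hdecomp : ∀ g : G,
      (ρ g : Matrix (Fin n) (Fin n) (AlgebraicClosure K)) =
        (M : Matrix (Fin n) (Fin n) (AlgebraicClosure K)) *
          (Matrix.reindex e e
            (Matrix.blockDiagonal' fun i =>
              ((ρi i g : Matrix (Fin (m i)) (Fin (m i)) (AlgebraicClosure K))))) *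
          ((M⁻¹ : Matrix.GeneralLinearGroup (Fin n) (AlgebraicClosure K)) :
            Matrix (Fin n) (Fin n) (AlgebraicClosure K)))
    (htr : ∀ g : G,
      (ρ g : Matrix (Fin n) (Fin n) (AlgebraicClosure K)).trace ∈
        (algebraMap K (AlgebraicClosure K)).fieldRange)
    (g₀ : G)
    (hg₀ : ∃ roots : Fin n → AlgebraicClosure K, Function.Injective roots ∧
      (∀ i, roots i ∈ (algebraMap K (AlgebraicClosure K)).fieldRange) ∧
      (ρ g₀ : Matrix (Fin n) (Fin n) (AlgebraicClosure K)).charpoly =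
        ∏ i, (X - C (roots i))) :
    ∀ (i : Fin r) (g : G),
      (ρi i g : Matrix (Fin (m i)) (Fin (m i)) (AlgebraicClosure K)).trace ∈
        (algebraMap K (AlgebraicClosure K)).fieldRange := by
  intro i g
  obtain ⟨roots, hinj, hK, hcp⟩ := hg₀
  choose a ha using fun k => RingHom.mem_fieldRange.1 (hK k)
  let B : G → ∀ j, Matrix (Fin (m j)) (Fin (m j)) (AlgebraicClosure K) := fun g j => ρi j g
  have hρ : ∀ g, (ρ g : Matrix (Fin n) (Fin n) _) = blockDiagonalConj M e (B g) := hdecomp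
  have hprod : ∏ j, (B g₀ j).charpoly = ∏ k, (X - C (algebraMap K _ (a k))) := by
    rw [← charpoly_blockDiagonalConj M e, ← hρ, hcp]
    simp only [ha]
  have ha_inj : Function.Injective a := fun k l hkl => hinj (by rw [← ha, ← ha, hkl])
  obtain ⟨f, hf⟩ := exists_aeval_eq_ite_of_prod_charpoly_eq (B g₀) ha_inj hprod i
  have hcomponent : (aeval (blockDiagonalConj M e (B g₀)) f * blockDiagonalConj M e (B g)).trace =
      (B g i).trace := by
    rw [← aeval_map_algebraMap (AlgebraicClosure K), aeval_algHom_apply, ← map_mul,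
      trace_blockDiagonalConj]
    simp [aeval_pi_apply₂, hf, apply_ite trace]
  have hmem : (aeval (ρ g₀ : Matrix (Fin n) (Fin n) (AlgebraicClosure K)) f * ρ g).trace ∈
      (algebraMap K (AlgebraicClosure K)).fieldRange :=
    trace_aeval_mul_mem_fieldRange ((Units.coeHom _).comp ρ) htr f g₀ g
  rwa [hρ, hρ, hcomponent] at hmem

/-- **Lemma (traces of each irreducible component are `K`-rational).**
If `ρ : G → GLₙ(K̄)` decomposes (up to conjugation) as a direct sum of irreducible
representations `ρ₁ ⊕ ⋯ ⊕ ρᵣ`, all traces of `ρ` lie in `K`, and some `ρ(g₀)` has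
characteristic polynomial with `n` distinct roots all lying in `K`, then all the traces of each
component `ρᵢ` also lie in `K`. -/
theorem component_traces_mem_base
    {G : Type*} [Group G] {K : Type*} [Field K] [CharZero K] {n r : ℕ}
    (ρ : G →* Matrix.GeneralLinearGroup (Fin n) (AlgebraicClosure K))
    (m : Fin r → ℕ)
    (ρi : (i : Fin r) → G →* Matrix.GeneralLinearGroup (Fin (m i)) (AlgebraicClosure K))
    (hirr : ∀ i, MatRep.IsIrreducible (ρi i))
    (e : (Σ i : Fin r, Fin (m i)) ≃ Fin n)
    (M : Matrix.GeneralLinearGroup (Fin n) (AlgebraicClosure K))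
    (hdecomp : ∀ g : G,
      (ρ g : Matrix (Fin n) (Fin n) (AlgebraicClosure K)) =
        (M : Matrix (Fin n) (Fin n) (AlgebraicClosure K)) *
          (Matrix.reindex e e
            (Matrix.blockDiagonal' fun i =>
              ((ρi i g : Matrix (Fin (m i)) (Fin (m i)) (AlgebraicClosure K))))) *
          ((M⁻¹ : Matrix.GeneralLinearGroup (Fin n) (AlgebraicClosure K)) :
            Matrix (Fin n) (Fin n) (AlgebraicClosure K)))
    (htr : ∀ g : G,
      (ρ g : Matrix (Fin n) (Fin n) (AlgebraicClosure K)).trace ∈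
        (algebraMap K (AlgebraicClosure K)).fieldRange)
    (g₀ : G)
    (hg₀ : ∃ roots : Fin n → AlgebraicClosure K, Function.Injective roots ∧
      (∀ i, roots i ∈ (algebraMap K (AlgebraicClosure K)).fieldRange) ∧
      (ρ g₀ : Matrix (Fin n) (Fin n) (AlgebraicClosure K)).charpoly =
        ∏ i, (X - C (roots i))) :
    ∀ (i : Fin r) (g : G),
      (ρi i g : Matrix (Fin (m i)) (Fin (m i)) (AlgebraicClosure K)).trace ∈
        (algebraMap K (AlgebraicClosure K)).fieldRange :=
  component_traces_mem_base_general ρ m ρi e M hdecomp htr g₀ hg₀
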